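/- Let K₁ ⊆ ℂ be a connected compact set with 1 ∈ K₁, −1 ∈ K₁, and diameter d(K₁) = 2, and let m ≥ 1 be an integer. Then the polynomials p_m(z) = (z² − 1)^m and P_m(z) = (z − 1)·(z² − 1)^m satisfy ‖p_m‖ ≤ 2·‖P_m‖, where ‖f‖ = sup_{z∈K₁} |f(z)|. -/

import Mathlib

open Polynomial

/-- The sup-norm of a polynomial over a set `K ⊆ ℂ`. -/
noncomputable def polyNorm (K : Set ℂ) (P : Polynomial ℂ) : ℝ :=
  sSup ((fun z => ‖P.eval z‖) '' K)

/-- The Tur\'an type inverse Markov factor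
`M_n(K) = inf { ‖P'‖_K / ‖P‖_K : P of exact degree n with all zeros in K }`. -/
noncomputable def invMarkov (n : ℕ) (K : Set ℂ) : ℝ :=
  sInf { r : ℝ | ∃ P : Polynomial ℂ, P ≠ 0 ∧ P.natDegree = n ∧
    (∀ z : ℂ, P.IsRoot z → z ∈ K) ∧
    r = polyNorm K (Polynomial.derivative P) / polyNorm K P }

/-- The minimal width of a set `K ⊆ ℂ`: the infimum over unit directions `u` of the
width of `K` in direction `u`. -/
noncomputable def minWidth (K : Set ℂ) : ℝ :=
  sInf { r : ℝ | ∃ u : ℂ, ‖u‖ = 1 ∧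
    r = sSup ((fun z => ((starRingEnd ℂ) u * z).re) '' K)
      - sInf ((fun z => ((starRingEnd ℂ) u * z).re) '' K) }


/-! Since `-1 ∈ K₁`, every `z ∈ K₁` has `|z + 1| ≤ d(K₁) = 2`, and by connectedness `K₁` contains a
point `w` with `|w - 1| = 1`, where `|P_m(w)| ≥ 1`; hence `‖P_m‖ ≥ 1`. Since
`|p_m(z)| = (|z - 1| |z + 1|)^m` and `|P_m(z)| = |z - 1| |p_m(z)|`, at points with `|z - 1| ≥ 1/2` we
get `|p_m(z)| ≤ 2 |P_m(z)|`, while at points with `|z - 1| < 1/2` we get `|p_m(z)| ≤ 1 ≤ ‖P_m‖`. -/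

lemma le_polyNorm {K : Set ℂ} (hK : IsCompact K) (P : Polynomial ℂ) {z : ℂ} (hz : z ∈ K) :
    ‖P.eval z‖ ≤ polyNorm K P :=
  le_csSup (hK.image (continuous_norm.comp P.continuous)).bddAbove ⟨z, hz, rfl⟩

lemma polyNorm_le {K : Set ℂ} (hne : K.Nonempty) {P : Polynomial ℂ} {C : ℝ}
    (h : ∀ z ∈ K, ‖P.eval z‖ ≤ C) : polyNorm K P ≤ C :=
  csSup_le (hne.image _) (by rintro _ ⟨z, hz, rfl⟩; exact h z hz)

lemma IsPreconnected.exists_mem_dist_eq {X : Type*} [PseudoMetricSpace X] {K : Set X}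
    (hK : IsPreconnected K) {a b : X} (ha : a ∈ K) (hb : b ∈ K) (c : X) {r : ℝ}
    (hr : r ∈ Set.Icc (dist a c) (dist b c)) : ∃ z ∈ K, dist z c = r :=
  hK.intermediate_value ha hb (continuous_id.dist continuous_const).continuousOn hr

lemma norm_eval_sq_sub_one_pow (m : ℕ) (z : ℂ) :
    ‖(((X : Polynomial ℂ) ^ 2 - 1) ^ m).eval z‖ = (‖z - 1‖ * ‖z + 1‖) ^ m := by
  rw [← norm_mul, ← norm_pow]
  congr 1
  simp only [eval_pow, eval_sub, eval_X, eval_one]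
  ring

lemma norm_eval_sub_one_mul_sq_sub_one_pow (m : ℕ) (z : ℂ) :
    ‖(((X : Polynomial ℂ) - 1) * ((X : Polynomial ℂ) ^ 2 - 1) ^ m).eval z‖ =
      ‖z - 1‖ * (‖z - 1‖ * ‖z + 1‖) ^ m := by
  rw [eval_mul, norm_mul, norm_eval_sq_sub_one_pow]
  simp

lemma one_le_norm_add_one_of_norm_sub_one_eq_one {w : ℂ} (hw : ‖w - 1‖ = 1) : 1 ≤ ‖w + 1‖ := by
  have h := norm_sub_le (w + 1) (w - 1)
  rw [hw, show w + 1 - (w - 1) = 2 by ring] at h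
  norm_num at h
  linarith

lemma pow_le_max_two_mul_one {a b : ℝ} (ha : 0 ≤ a) (hb : 0 ≤ b) (hb2 : b ≤ 2) (m : ℕ) :
    (a * b) ^ m ≤ max (2 * (a * (a * b) ^ m)) 1 := by
  rcases le_or_gt (1 / 2) a with ha2 | ha2
  · refine le_max_of_le_left ?_
    nlinarith [pow_nonneg (mul_nonneg ha hb) m]
  · exact le_max_of_le_right (pow_le_one₀ (mul_nonneg ha hb) (by nlinarith))

theorem stmt_13_general (K₁ : Set ℂ) (hK : IsCompact K₁) (hconn : IsConnected K₁)
    (h1 : (1 : ℂ) ∈ K₁) (hm1 : (-1 : ℂ) ∈ K₁) (hd : Metric.diam K₁ = 2)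
    (m : ℕ) :
    polyNorm K₁ (((X : Polynomial ℂ) ^ 2 - 1) ^ m) ≤
      2 * polyNorm K₁ (((X : Polynomial ℂ) - 1) * ((X : Polynomial ℂ) ^ 2 - 1) ^ m) := by
  set P : Polynomial ℂ := ((X : Polynomial ℂ) - 1) * ((X : Polynomial ℂ) ^ 2 - 1) ^ m
  obtain ⟨w, hwK, hw⟩ : ∃ w ∈ K₁, dist w 1 = 1 :=
    hconn.isPreconnected.exists_mem_dist_eq h1 hm1 1 (by norm_num [Complex.dist_eq])
  rw [Complex.dist_eq] at hw
  have hP : 1 ≤ polyNorm K₁ P := by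
    refine le_trans ?_ (le_polyNorm hK P hwK)
    rw [norm_eval_sub_one_mul_sq_sub_one_pow, hw, one_mul, one_mul]
    exact one_le_pow₀ (one_le_norm_add_one_of_norm_sub_one_eq_one hw)
  refine polyNorm_le ⟨1, h1⟩ fun z hz => ?_
  have hz1 : ‖z + 1‖ ≤ 2 := by
    simpa [Complex.dist_eq, hd] using Metric.dist_le_diam_of_mem hK.isBounded hz hm1
  calc ‖(((X : Polynomial ℂ) ^ 2 - 1) ^ m).eval z‖
      ≤ max (2 * ‖P.eval z‖) 1 := by
        rw [norm_eval_sq_sub_one_pow, norm_eval_sub_one_mul_sq_sub_one_pow]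
        exact pow_le_max_two_mul_one (norm_nonneg _) (norm_nonneg _) hz1 m
    _ ≤ 2 * polyNorm K₁ P := max_le (by linarith [le_polyNorm hK P hz]) (by linarith)

theorem stmt_13 (K₁ : Set ℂ) (hK : IsCompact K₁) (hconn : IsConnected K₁)
    (h1 : (1 : ℂ) ∈ K₁) (hm1 : (-1 : ℂ) ∈ K₁) (hd : Metric.diam K₁ = 2)
    (m : ℕ) (hm : 1 ≤ m) :
    polyNorm K₁ (((X : Polynomial ℂ) ^ 2 - 1) ^ m) ≤
      2 * polyNorm K₁ (((X : Polynomial ℂ) - 1) * ((X : Polynomial ℂ) ^ 2 - 1) ^ m) :=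
  stmt_13_general K₁ hK hconn h1 hm1 hd m
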